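/- Let (X,d) be a compact metric space, (f_n) continuous self-maps, x,y ∈ X, ε > 0, and N ∈ ℕ. If liminf_{n→∞} (1/n)·#{0 ≤ i ≤ n−1 : d(f_1^i(x), f_1^i(y)) < ε} = 0, then liminf_{m→∞} (1/m)·#{0 ≤ i ≤ m−1 : d(f_1^{Ni}(x), f_1^{Ni}(y)) < ε} = 0. -/

import Mathlib

open Filter
open scoped Classical

variable {X : Type*}

/-- `orb f n = f_n ∘ ⋯ ∘ f_1` (0-based: `f k` is the `(k+1)`-st map). -/
def orb (f : ℕ → X → X) : ℕ → X → X
  | 0 => id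
  | n + 1 => f n ∘ orb f n

/-! With `m = n / N + 1` we have `n ≤ N m < n + N`, so among the first `m` multiples of `N`
at most `A n + N` are close times, where `A n` counts the close times below `n`. Hence the
density at time `m` along multiples of `N` is at most `N · A n / n + N² / n`, which is small
whenever `A n / n` is small and `n` is large. -/

theorem Filter.liminf_eq_zero_iff_frequently_lt {α : Type*} {l : Filter α} [l.NeBot]
    {u : α → ℝ} (h0 : ∀ a, 0 ≤ u a) (hb : IsBoundedUnder (· ≤ ·) l u) :
    liminf u l = 0 ↔ ∀ δ > 0, ∃ᶠ a in l, u a < δ := by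
  have hcobdd : IsCoboundedUnder (· ≥ ·) l u := hb.isCoboundedUnder_ge
  have hbdd : IsBoundedUnder (· ≥ ·) l u := isBoundedUnder_of ⟨0, h0⟩
  have hnonneg : 0 ≤ liminf u l := le_liminf_of_le hcobdd (.of_forall h0)
  refine ⟨fun h δ hδ => frequently_lt_of_liminf_lt hcobdd (h ▸ hδ), fun h => ?_⟩
  refine le_antisymm (le_of_forall_pos_le_add fun δ hδ => ?_) hnonneg
  rw [zero_add]
  exact liminf_le_of_frequently_le ((h δ hδ).mono fun _ => le_of_lt) hbdd

namespace Nat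

variable (P : ℕ → Prop) [DecidablePred P]

theorem count_comp_mul_le {N : ℕ} (hN : 0 < N) (m : ℕ) :
    count (fun i => P (N * i)) m ≤ count P (N * m) := by
  simp only [count_eq_card_filter_range]
  refine Finset.card_le_card_of_injOn (N * ·) (fun i hi => ?_)
    (fun a _ b _ hab => Nat.eq_of_mul_eq_mul_left hN hab)
  simp only [Finset.coe_filter, Finset.mem_range, Set.mem_ofPred_eq] at hi ⊢
  exact ⟨Nat.mul_lt_mul_of_pos_left hi.1 hN, hi.2⟩

theorem count_le_count_add_sub (k n : ℕ) : count P k ≤ count P n + (k - n) :=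
  calc count P k ≤ count P (n + (k - n)) := count_monotone P (by omega)
    _ = count P n + count (fun i => P (n + i)) (k - n) := count_add P n (k - n)
    _ ≤ count P n + (k - n) := Nat.add_le_add_left (count_le _) _

theorem isBoundedUnder_le_count_div :
    IsBoundedUnder (· ≤ ·) atTop fun n => (count P n : ℝ) / n :=
  isBoundedUnder_of ⟨1, fun n => div_le_one_of_le₀ (by exact_mod_cast count_le P) n.cast_nonneg⟩

theorem count_comp_mul_div_le {N n : ℕ} (hN : 0 < N) (hn : 0 < n) :
    (count (fun i => P (N * i)) (n / N + 1) : ℝ) / (n / N + 1 : ℕ)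
      ≤ N * ((count P n : ℝ) / n) + N ^ 2 / n := by
  set m := n / N + 1
  have hnm : n ≤ N * m := by
    have := Nat.lt_mul_div_succ n hN
    simp only [m]; omega
  have hmn : N * m ≤ n + N := by
    have := Nat.mul_div_le n N
    simp only [m, Nat.mul_add]; omega
  have hcount : count (fun i => P (N * i)) m ≤ count P n + N :=
    calc count (fun i => P (N * i)) m ≤ count P (N * m) := count_comp_mul_le P hN m
      _ ≤ count P n + (N * m - n) := count_le_count_add_sub P _ _
      _ ≤ count P n + N := by omega
  have hnR : (0 : ℝ) < n := by exact_mod_cast hn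
  have hmR : (0 : ℝ) < m := by positivity
  have hnmR : (n : ℝ) ≤ N * m := by exact_mod_cast hnm
  have hcountR : (count (fun i => P (N * i)) m : ℝ) ≤ count P n + N := by exact_mod_cast hcount
  calc (count (fun i => P (N * i)) m : ℝ) / m ≤ (count P n + N) / m := by gcongr
    _ ≤ (count P n + N) / (n / N) := by
        gcongr
        rw [div_le_iff₀ (by exact_mod_cast hN)]
        linarith
    _ = N * ((count P n : ℝ) / n) + N ^ 2 / n := by field_simp

theorem liminf_count_comp_mul_div_eq_zero {N : ℕ} (hN : 0 < N)
    (h : liminf (fun n => (count P n : ℝ) / n) atTop = 0) :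
    liminf (fun m => (count (fun i => P (N * i)) m : ℝ) / m) atTop = 0 := by
  rw [liminf_eq_zero_iff_frequently_lt (fun n => by positivity)
    (isBoundedUnder_le_count_div P)] at h
  rw [liminf_eq_zero_iff_frequently_lt (fun n => by positivity)
    (isBoundedUnder_le_count_div _)]
  intro δ hδ
  have hN' : (0 : ℝ) < N := by exact_mod_cast hN
  have hsmall : ∀ᶠ n : ℕ in atTop, 0 < n ∧ (N : ℝ) ^ 2 / n < δ / 2 :=
    (eventually_gt_atTop 0).and <|
      (tendsto_const_div_atTop_nhds_zero_nat _).eventually (gt_mem_nhds (half_pos hδ))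
  have hdense : ∃ᶠ n : ℕ in atTop, 0 < n ∧ (N : ℝ) ^ 2 / n < δ / 2 ∧
      (count P n : ℝ) / n < δ / (2 * N) :=
    ((h _ (by positivity)).and_eventually hsmall).mono fun n ⟨hlt, hpos, hsq⟩ => ⟨hpos, hsq, hlt⟩
  refine (tendsto_atTop_mono (fun n => Nat.le_succ _) (tendsto_div_const_atTop hN.ne')).frequently
    (hdense.mono fun n ⟨hn, hsq, hlt⟩ => ?_)
  calc _ ≤ N * ((count P n : ℝ) / n) + N ^ 2 / n := count_comp_mul_div_le P hN hn
    _ < N * (δ / (2 * N)) + δ / 2 := by gcongr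
    _ = δ := by field_simp; ring

end Nat

theorem stmt_5 [MetricSpace X] (f : ℕ → X → X)
    (x y : X) (ε : ℝ)
    (N : ℕ) (hN : 0 < N)
    (h : liminf (fun n =>
        (((Finset.range n).filter
          (fun i => dist (orb f i x) (orb f i y) < ε)).card : ℝ) / n) atTop = 0) :
    liminf (fun m =>
        (((Finset.range m).filter
          (fun i => dist (orb f (N * i) x) (orb f (N * i) y) < ε)).card : ℝ) / m) atTop = 0 := by
  simp only [← Nat.count_eq_card_filter_range] at h ⊢
  exact Nat.liminf_count_comp_mul_div_eq_zero (fun i => dist (orb f i x) (orb f i y) < ε) hN h
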